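/- Let k ∈ ℕ and let X be an uncountable subset of (2^ω)^k with the subspace topology. Then X is a Δ-set if and only if every countable partition of X has a point-finite open expansion; that is, if and only if for every sequence (P_n : n ∈ ℕ) of pairwise disjoint (possibly empty) subsets of X with ⋃_n P_n = X, there exists a sequence (U_n : n ∈ ℕ) of relatively open subsets of X with P_n ⊆ U_n for all n which is point-finite, meaning every x ∈ X belongs to U_n for only finitely many n. -/

import Mathlib

/-- The Cantor space `2^ω`. -/
abbrev Cantor : Type := ℕ → Bool

/-- A sequence of sets is *vanishing* if it is decreasing and has empty intersection. -/
def Vanishing {α : Type*} (F : ℕ → Set α) : Prop :=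
  (∀ n, F (n + 1) ⊆ F n) ∧ (⋂ n, F n) = ∅

/-- An uncountable subset `X` of a topological space is a *Δ-set* if every vanishing
sequence of subsets of `X` admits a vanishing expansion by relatively open sets. -/
def IsDeltaSet {α : Type*} [TopologicalSpace α] (X : Set α) : Prop :=
  ¬ X.Countable ∧
    ∀ F : ℕ → Set X, Vanishing F →
      ∃ U : ℕ → Set X, (∀ n, IsOpen (U n)) ∧ Vanishing U ∧ ∀ n, F n ⊆ U n

/-!
A partition `(P n)` gives the vanishing sequence of its tails `⋃ m ≥ n, P m`, and a
vanishing open expansion of the tails is a point-finite open expansion of `P`. Conversely, a vanishing sequence `(F n)` is cut into the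
partition `(F 0)ᶜ, F 0 \ F 1, F 1 \ F 2, …` (the `disjointed` pieces of `n ↦ (F n)ᶜ`), and the
strict tails `⋃ m > n, U m` of a point-finite open expansion `U` of that partition vanish
and contain `F n`.
-/

open Set Function

section Vanishing

variable {α : Type*}

theorem vanishing_iff {F : ℕ → Set α} : Vanishing F ↔ Antitone F ∧ ∀ x, ∃ n, x ∉ F n := by
  simp only [Vanishing, eq_empty_iff_forall_notMem, mem_iInter, not_forall]
  exact and_congr_left' ⟨antitone_nat_of_succ_le, fun h n => h n.le_succ⟩

theorem Vanishing.finite_setOf_mem {U : ℕ → Set α} (hU : Vanishing U) (x : α) :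
    {n | x ∈ U n}.Finite := by
  obtain ⟨hanti, hx⟩ := vanishing_iff.mp hU
  obtain ⟨N, hN⟩ := hx x
  refine (finite_Iio N).subset fun n hn => ?_
  by_contra hNn
  exact hN (hanti (not_lt.mp hNn) hn)

theorem vanishing_biUnion_ge_of_pairwise_disjoint {P : ℕ → Set α}
    (hdisj : Pairwise (Disjoint on P)) (hcov : ⋃ n, P n = univ) :
    Vanishing fun n => ⋃ m ≥ n, P m := by
  refine vanishing_iff.mpr ⟨fun n n' hnn' => biUnion_subset_biUnion_left fun m hm =>
    le_trans hnn' hm, fun x => ?_⟩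
  obtain ⟨m, hm⟩ := mem_iUnion.mp (hcov ▸ mem_univ x)
  refine ⟨m + 1, fun hx => ?_⟩
  obtain ⟨m', hm', hxm'⟩ := mem_iUnion₂.mp hx
  exact (hdisj (by omega : m ≠ m')).le_bot ⟨hm, hxm'⟩

theorem vanishing_biUnion_gt_of_finite_setOf_mem {U : ℕ → Set α}
    (hfin : ∀ x, {n | x ∈ U n}.Finite) : Vanishing fun n => ⋃ m > n, U m := by
  refine vanishing_iff.mpr ⟨fun n n' hnn' => biUnion_subset_biUnion_left fun m hm =>
    lt_of_le_of_lt hnn' hm, fun x => ?_⟩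
  obtain ⟨N, hN⟩ := (hfin x).bddAbove
  refine ⟨N, fun hx => ?_⟩
  obtain ⟨m, hm, hxm⟩ := mem_iUnion₂.mp hx
  exact absurd (hN hxm) (not_le.mpr hm)

theorem Vanishing.subset_biUnion_disjointed_compl {F : ℕ → Set α} (hF : Vanishing F) (n : ℕ) :
    F n ⊆ ⋃ m > n, disjointed (fun i => (F i)ᶜ) m := by
  obtain ⟨hanti, hout⟩ := vanishing_iff.mp hF
  intro x hx
  have hcov : x ∈ ⋃ m, disjointed (fun i => (F i)ᶜ) m := by
    rw [iUnion_disjointed, mem_iUnion]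
    exact hout x
  obtain ⟨m, hm⟩ := mem_iUnion.mp hcov
  have hnm : n < m := by
    by_contra! hmn
    exact disjointed_subset _ m hm (hanti hmn hx)
  exact mem_biUnion hnm hm

end Vanishing

section Expansion

variable {Y : Type*} [TopologicalSpace Y]

theorem exists_pointFinite_open_expansion_of_vanishing_open_expansion
    (hD : ∀ F : ℕ → Set Y, Vanishing F →
      ∃ U : ℕ → Set Y, (∀ n, IsOpen (U n)) ∧ Vanishing U ∧ ∀ n, F n ⊆ U n)
    {P : ℕ → Set Y} (hdisj : Pairwise (Disjoint on P)) (hcov : ⋃ n, P n = univ) :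
    ∃ U : ℕ → Set Y, (∀ n, IsOpen (U n)) ∧ (∀ n, P n ⊆ U n) ∧ ∀ x, {n | x ∈ U n}.Finite := by
  obtain ⟨U, hUo, hU, hPU⟩ := hD _ (vanishing_biUnion_ge_of_pairwise_disjoint hdisj hcov)
  exact ⟨U, hUo, fun n => (subset_biUnion_of_mem (le_refl n)).trans (hPU n),
    hU.finite_setOf_mem⟩

theorem exists_vanishing_open_expansion_of_pointFinite_open_expansion
    (hE : ∀ P : ℕ → Set Y, Pairwise (Disjoint on P) → ⋃ n, P n = univ →
      ∃ U : ℕ → Set Y, (∀ n, IsOpen (U n)) ∧ (∀ n, P n ⊆ U n) ∧ ∀ x, {n | x ∈ U n}.Finite)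
    {F : ℕ → Set Y} (hF : Vanishing F) :
    ∃ U : ℕ → Set Y, (∀ n, IsOpen (U n)) ∧ Vanishing U ∧ ∀ n, F n ⊆ U n := by
  have hcov : ⋃ n, disjointed (fun i => (F i)ᶜ) n = univ := by
    rw [iUnion_disjointed, ← compl_iInter, hF.2, compl_empty]
  obtain ⟨U, hUo, hPU, hfin⟩ := hE _ (disjoint_disjointed _) hcov
  refine ⟨fun n => ⋃ m > n, U m, fun n => isOpen_biUnion fun m _ => hUo m,
    vanishing_biUnion_gt_of_finite_setOf_mem hfin, fun n => ?_⟩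
  exact (hF.subset_biUnion_disjointed_compl n).trans (biUnion_mono subset_rfl fun m _ => hPU m)

end Expansion

/-- An uncountable `X ⊆ (2^ω)^k` is a Δ-set iff every countable partition of `X`
has a point-finite open expansion. -/
theorem isDeltaSet_iff_partition_pointfinite_expansion (k : ℕ)
    (X : Set (Fin k → Cantor)) (hX : ¬ X.Countable) :
    IsDeltaSet X ↔
      ∀ P : ℕ → Set X, (∀ m n, m ≠ n → P m ∩ P n = ∅) → (⋃ n, P n) = Set.univ →
        ∃ U : ℕ → Set X, (∀ n, IsOpen (U n)) ∧ (∀ n, P n ⊆ U n) ∧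
          ∀ x : X, {n | x ∈ U n}.Finite := by
  rw [IsDeltaSet, and_iff_right hX]
  refine ⟨fun hD P hdisj hcov => ?_, fun hE F hF => ?_⟩
  · exact exists_pointFinite_open_expansion_of_vanishing_open_expansion hD
      (fun m n hmn => disjoint_iff_inter_eq_empty.mpr (hdisj m n hmn)) hcov
  · exact exists_vanishing_open_expansion_of_pointFinite_open_expansion
      (fun P hP => hE P fun m n hmn => disjoint_iff_inter_eq_empty.mp (hP hmn)) hF
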